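/- Let A be a normal-form udpda, let q be a returning state with exit point q'. Then for every stack word s ∈ (Γ∖{⊥})*⊥ it holds that (q,s) ⊢* (q',s); moreover, the transcript of the shortest computation from (q,s) to (q',s) equals, for every such s, the transcript of the return segment from q. -/
import Mathlib


/-- The auxiliary alphabet `{a, f}` used in transcripts of computations. -/
inductive AF
  | a
  | f
deriving DecidableEq

/-- The kind of a control state of a normal-form udpda: internal, push, or pop. -/
inductive StKind
  | internal
  | push
  | pop
deriving DecidableEq

/-- A normal-form udpda: the state set is partitioned (by `kind`) into internal
states `Q₀`, push states `Q₊₁` and pop states `Q₋₁`, with total transition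
functions `δint`, `δpush`, `δpop`, and `reads q = true` iff the transitions
from `q` read the input symbol `a` (i.e. `q ∈ R`). -/
structure NFPDA (Q Γ : Type) where
  finQ : Finite Q
  finΓ : Finite Γ
  bot : Γ
  init : Q
  final : Set Q
  kind : Q → StKind
  δint : Q → Q
  δpush : Q → Q × Γ
  δpop : Q → Γ → Q
  reads : Q → Bool

namespace NFPDA

variable {Q Γ : Type}

/-- Valid stack contents: a word in `(Γ∖{⊥})*⊥`. -/
def IsStack (A : NFPDA Q Γ) (s : List Γ) : Prop :=
  ∃ s', A.bot ∉ s' ∧ s = s' ++ [A.bot]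

/-- The unique move available at a configuration.  (A pop transition with the
bottom symbol on top of the stack leaves the stack unchanged; on valid stacks
the bottom symbol is on top exactly when the stack is a singleton.) -/
def step (A : NFPDA Q Γ) : Q × List Γ → Q × List Γ := fun c =>
  match A.kind c.1 with
  | .internal => (A.δint c.1, c.2)
  | .push => ((A.δpush c.1).1, (A.δpush c.1).2 :: c.2)
  | .pop =>
    match c.2 with
    | [] => (c.1, [])
    | [γ] => (A.δpop c.1 γ, [γ])
    | γ :: s' => (A.δpop c.1 γ, s')

/-- The configuration reached after `k` moves of the unique infinite
computation starting at `c`. -/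
def iter (A : NFPDA Q Γ) (c : Q × List Γ) (k : ℕ) : Q × List Γ := A.step^[k] c

open Classical in
/-- The contribution `μ(q)σ` of one move from state `q` to the transcript:
`f` if `q` is final, followed by `a` if the move reads an input symbol. -/
noncomputable def emit (A : NFPDA Q Γ) (q : Q) : List AF :=
  (if q ∈ A.final then [AF.f] else []) ++ (if A.reads q then [AF.a] else [])

/-- The transcript `μ(q₁)σ₁μ(q₂)σ₂⋯μ(q_k)σ_k` of the first `k` moves of the
computation starting at `c`. -/
noncomputable def transcriptN (A : NFPDA Q Γ) (c : Q × List Γ) (k : ℕ) : List AF :=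
  ((List.range k).map fun i => A.emit (A.iter c i).1).flatten

/-- The number of input symbols read during the first `k` moves of the
computation starting at `c`. -/
def readCount (A : NFPDA Q Γ) (c : Q × List Γ) (k : ℕ) : ℕ :=
  ((List.range k).filter fun i => A.reads (A.iter c i).1).length

/-- The language of a normal-form udpda: `a^n` is accepted iff the unique
computation starting at `(q₀, ⊥)` reaches a final state having read exactly
`n` input symbols. -/
def lang (A : NFPDA Q Γ) : Set ℕ :=
  {n | ∃ k, A.readCount (A.init, [A.bot]) k = n ∧ (A.iter (A.init, [A.bot]) k).1 ∈ A.final}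

end NFPDA


namespace NFPDA

lemma step_internal' (A : NFPDA Q Γ) {p : Q} (h : A.kind p = .internal) (l : List Γ) :
    A.step (p, l) = (A.δint p, l) := by simp [step, h]

lemma step_push' (A : NFPDA Q Γ) {p : Q} (h : A.kind p = .push) (l : List Γ) :
    A.step (p, l) = ((A.δpush p).1, (A.δpush p).2 :: l) := by simp [step, h]

lemma step_pop' (A : NFPDA Q Γ) {p : Q} (h : A.kind p = .pop) (γ : Γ) {l : List Γ}
    (hl : l ≠ []) : A.step (p, γ :: l) = (A.δpop p γ, l) := by
  cases l with
  | nil => exact absurd rfl hl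
  | cons x xs => simp [step, h]

lemma iter_succ' (A : NFPDA Q Γ) (c : Q × List Γ) (k : ℕ) :
    A.iter c (k+1) = A.step (A.iter c k) := by
  simp [iter, Function.iterate_succ_apply']

end NFPDA

/-- Let `A` be a normal-form udpda and `q` a returning state
with exit point `q'`: the computation from `(q,⊥)` reaches `(q',⊥)` after
`k0` moves, `q'` is a pop state, and no earlier configuration of this
computation has a pop state together with stack `⊥`.  Then for every valid
stack `s`, the configuration `(q',s)` is reached from `(q,s)`, and the
transcript of the shortest computation from `(q,s)` to `(q',s)` equals the
transcript of the return segment from `q`. -/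
theorem returning_state_exit_point (Q Γ : Type) (A : NFPDA Q Γ) (q q' : Q) (k0 : ℕ)
    (hrun : A.iter (q, [A.bot]) k0 = (q', [A.bot]))
    (hpop : A.kind q' = StKind.pop)
    (hfirst : ∀ j < k0, ¬((A.iter (q, [A.bot]) j).2 = [A.bot] ∧
        A.kind (A.iter (q, [A.bot]) j).1 = StKind.pop)) :
    ∀ s : List Γ, A.IsStack s →
      ∃ k : ℕ, A.iter (q, s) k = (q', s) ∧
        (∀ j < k, A.iter (q, s) j ≠ (q', s)) ∧
        A.transcriptN (q, s) k = A.transcriptN (q, [A.bot]) k0 := by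
  rintro s ⟨t, ht, rfl⟩
  have key : ∀ j ≤ k0, ∃ p u, A.iter (q, [A.bot]) j = (p, u ++ [A.bot]) ∧
      A.iter (q, t ++ [A.bot]) j = (p, u ++ (t ++ [A.bot])) := by
    intro j
    induction j with
    | zero => intro _; exact ⟨q, [], by simp [NFPDA.iter], by simp [NFPDA.iter]⟩
    | succ j ih =>
      intro hj
      obtain ⟨p, u, h1, h2⟩ := ih (Nat.le_of_succ_le hj)
      cases hk : A.kind p with
      | internal =>
        exact ⟨A.δint p, u,
          by rw [A.iter_succ', h1, A.step_internal' hk],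
          by rw [A.iter_succ', h2, A.step_internal' hk]⟩
      | push =>
        exact ⟨(A.δpush p).1, (A.δpush p).2 :: u,
          by rw [A.iter_succ', h1, A.step_push' hk]; rfl,
          by rw [A.iter_succ', h2, A.step_push' hk]; rfl⟩
      | pop =>
        have hne : u ≠ [] := by
          rintro rfl
          exact hfirst j hj ⟨by simp [h1], by rw [h1]; exact hk⟩
        obtain ⟨γ, u', rfl⟩ := List.exists_cons_of_ne_nil hne
        refine ⟨A.δpop p γ, u', ?_, ?_⟩
        · rw [A.iter_succ', h1]
          exact A.step_pop' hk γ (by simp)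
        · rw [A.iter_succ', h2]
          exact A.step_pop' hk γ (by simp)
  obtain ⟨p, u, h1, h2⟩ := key k0 le_rfl
  rw [hrun] at h1
  have hpq : p = q' := by simpa using congrArg Prod.fst h1.symm
  have hu : u = [] := by
    have := congrArg (List.length ∘ Prod.snd) h1
    simpa using this
  rw [hpq, hu] at h2
  refine ⟨k0, by simpa using h2, ?_, ?_⟩
  · intro j hj hcontra
    obtain ⟨p2, u2, g1, g2⟩ := key j (le_of_lt hj)
    rw [hcontra] at g2
    have hpq2 : p2 = q' := by simpa using congrArg Prod.fst g2.symm
    have hu2 : u2 = [] := by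
      have := congrArg (List.length ∘ Prod.snd) g2
      simpa using this
    rw [hpq2, hu2] at g1
    exact hfirst j hj ⟨by simp [g1], by rw [g1]; exact hpop⟩
  · unfold NFPDA.transcriptN
    congr 1
    apply List.map_congr_left
    intro i hi
    rw [List.mem_range] at hi
    obtain ⟨p, u, g1, g2⟩ := key i (le_of_lt hi)
    rw [g1, g2]
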